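/- arXiv:1801.05451 — 2 statements merged into one kernel-verified Lean document; each statement's English description precedes it below -/
import Mathlib

section
/- Let A be a quasi-ordered *-algebra and Q ⊆ A a dominant set. Then Q^↓ := {a ∈ A : for every q ∈ Q there exist r, s ∈ Q with a* q² a ≲ r² and a q² a* ≲ s²} is a unital *-subalgebra of A (it contains 1 and is closed under addition, scalar multiplication, multiplication and the star operation), and Q ⊆ Q^↓. -/
open ComplexOrder

variable {A : Type*} [Ring A] [Algebra ℂ A] [StarRing A] [StarModule ℂ A]

noncomputable def starLF (ω : A →ₗ[ℂ] ℂ) : A →ₗ[ℂ] ℂ where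
  toFun a := starRingEnd ℂ (ω (star a))
  map_add' a b := by simp [star_add]
  map_smul' c a := by simp [star_smul]

def bimodLF (b c : A) (ω : A →ₗ[ℂ] ℂ) : A →ₗ[ℂ] ℂ where
  toFun a := ω (c * a * b)
  map_add' x y := by simp [mul_add, add_mul]
  map_smul' r x := by simp [mul_smul_comm, smul_mul_assoc]

def AlgPositive (ω : A →ₗ[ℂ] ℂ) : Prop := ∀ a : A, 0 ≤ ω (star a * a)

/-- A quasi-ordered *-algebra: a quasi-order on the Hermitian elements compatible
with translations and conjugations, with `0 ≲ 1`. -/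
structure QOSA (A : Type*) [Ring A] [Algebra ℂ A] [StarRing A] [StarModule ℂ A] where
  le : A → A → Prop
  le_refl : ∀ a : A, IsSelfAdjoint a → le a a
  le_trans : ∀ a b c : A, IsSelfAdjoint a → IsSelfAdjoint b → IsSelfAdjoint c →
    le a b → le b c → le a c
  add_right : ∀ a b c : A, IsSelfAdjoint a → IsSelfAdjoint b → IsSelfAdjoint c →
    le a b → le (a + c) (b + c)
  conj_le : ∀ a b d : A, IsSelfAdjoint a → IsSelfAdjoint b →
    le a b → le (star d * a * d) (star d * b * d)
  zero_le_one : le 0 1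

/-- The positive cone `A⁺` of a quasi-ordered *-algebra. -/
def QOSA.pos (𝒜 : QOSA A) : Set A := {a | IsSelfAdjoint a ∧ 𝒜.le 0 a}

/-- A positive element is coercive if `ε·1 ≲ q` for some real `ε > 0`. -/
def QOSA.Coercive (𝒜 : QOSA A) (q : A) : Prop :=
  q ∈ 𝒜.pos ∧ ∃ ε : ℝ, 0 < ε ∧ 𝒜.le ((ε : ℂ) • (1 : A)) q

/-- A dominant set: nonempty, pairwise commuting Hermitian elements, squares coercive,
closed under scaling by reals `≥ 1` and under multiplication. -/
def QOSA.Dominant (𝒜 : QOSA A) (Q : Set A) : Prop :=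
  Q.Nonempty ∧ (∀ q ∈ Q, IsSelfAdjoint q) ∧ (∀ q ∈ Q, ∀ r ∈ Q, q * r = r * q) ∧
    (∀ q ∈ Q, 𝒜.Coercive (q ^ 2)) ∧
    (∀ q ∈ Q, ∀ c : ℝ, 1 ≤ c → (c : ℂ) • q ∈ Q) ∧ (∀ q ∈ Q, ∀ r ∈ Q, q * r ∈ Q)

/-- `Q^↓`, the set of elements dominated by `Q`. -/
def QOSA.domSub (𝒜 : QOSA A) (Q : Set A) : Set A :=
  {a | ∀ q ∈ Q, ∃ r ∈ Q, ∃ s ∈ Q,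
    𝒜.le (star a * q ^ 2 * a) (r ^ 2) ∧ 𝒜.le (a * q ^ 2 * star a) (s ^ 2)}

section Stmt13AuxSec
set_option linter.unusedSectionVars false

namespace Stmt13Aux

lemma sa_conj {x : A} (d : A) (hx : IsSelfAdjoint x) :
    IsSelfAdjoint (star d * x * d) := by
  simp [IsSelfAdjoint, star_mul, mul_assoc, hx.star_eq]

lemma sa_rsmul (c : ℝ) {x : A} (hx : IsSelfAdjoint x) :
    IsSelfAdjoint ((c : ℂ) • x) := by
  simp [IsSelfAdjoint, star_smul, hx.star_eq, Complex.star_def, Complex.conj_ofReal]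

lemma conj_smul_one (c : ℝ) (x : A) :
    star ((c:ℂ) • (1:A)) * x * ((c:ℂ) • (1:A)) = ((c*c : ℝ):ℂ) • x := by
  rw [star_smul, star_one, Complex.star_def, Complex.conj_ofReal, smul_mul_assoc, one_mul,
    mul_smul_comm, mul_one, smul_smul, Complex.ofReal_mul]

lemma smul_sq (c : ℝ) (r : A) : (((c:ℝ):ℂ) • r)^2 = ((c*c : ℝ):ℂ) • r^2 := by
  rw [pow_two, pow_two, smul_mul_assoc, mul_smul_comm, smul_smul, Complex.ofReal_mul]

/-- scaling by a nonnegative real preserves the quasi-order -/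
lemma le_rsmul (𝒜 : QOSA A) {a b : A} {c : ℝ} (hc : 0 ≤ c)
    (ha : IsSelfAdjoint a) (hb : IsSelfAdjoint b) (h : 𝒜.le a b) :
    𝒜.le ((c:ℂ) • a) ((c:ℂ) • b) := by
  have h2 := 𝒜.conj_le a b (((Real.sqrt c : ℝ):ℂ) • 1) ha hb h
  rw [conj_smul_one, conj_smul_one, Real.mul_self_sqrt hc] at h2
  exact h2

/-- commuting squares: `s * r^2 * s = (r*s)^2` when `s*r = r*s`. -/
lemma comm_sq {r s : A} (h : s * r = r * s) : s * r^2 * s = (r*s)^2 := by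
  rw [pow_two, pow_two, show s * (r*r) = (s*r)*r from (mul_assoc s r r).symm, h, mul_assoc,
    mul_assoc]

section
variable (𝒜 : QOSA A) {Q : Set A}

lemma le_rsmul_sq (hQ : 𝒜.Dominant Q) {r : A} (hr : r ∈ Q) {c : ℝ} (hc : 0 ≤ c) :
    ∃ t ∈ Q, 𝒜.le ((c:ℂ) • r^2) (t^2) := by
  obtain ⟨-, hsa, -, hcoer, hscale, -⟩ := hQ
  have hrsa : IsSelfAdjoint r := hsa r hr
  have hr2sa : IsSelfAdjoint (r^2) := hrsa.pow 2
  set m : ℝ := max c 1 with hm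
  have hm1 : (1:ℝ) ≤ Real.sqrt m := by
    rw [show (1:ℝ) = Real.sqrt 1 from (Real.sqrt_one).symm]
    exact Real.sqrt_le_sqrt (le_max_right c 1)
  refine ⟨((Real.sqrt m : ℝ):ℂ) • r, hscale r hr _ hm1, ?_⟩
  rw [smul_sq, Real.mul_self_sqrt (le_trans hc (le_max_left c 1))]
  -- goal : le (c • r²) (m • r²)
  have h0 : 𝒜.le 0 (r^2) := (hcoer r hr).1.2
  have h1 : 𝒜.le 0 (((m - c : ℝ):ℂ) • r^2) := by
    have := le_rsmul 𝒜 (sub_nonneg.mpr (le_max_left c 1)) (IsSelfAdjoint.zero A) hr2sa h0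
    rwa [smul_zero] at this
  have h2 := 𝒜.add_right 0 (((m - c : ℝ):ℂ) • r^2) (((c:ℝ):ℂ) • r^2) (IsSelfAdjoint.zero A)
    (sa_rsmul _ hr2sa) (sa_rsmul _ hr2sa) h1
  rw [zero_add] at h2
  have e : ((m - c : ℝ):ℂ) • r^2 + ((c:ℝ):ℂ) • r^2 = ((m:ℝ):ℂ) • r^2 := by
    rw [← add_smul, ← Complex.ofReal_add, sub_add_cancel]
  rw [e] at h2
  exact h2


lemma le_rsmul_dom (hQ : 𝒜.Dominant Q) {x r : A} (hx : IsSelfAdjoint x) (hr : r ∈ Q)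
    (h : 𝒜.le x (r^2)) {c : ℝ} (hc : 0 ≤ c) :
    ∃ t ∈ Q, 𝒜.le ((c:ℂ) • x) (t^2) := by
  have hrsa : IsSelfAdjoint r := hQ.2.1 r hr
  have h1 := le_rsmul 𝒜 hc hx (hrsa.pow 2) h
  obtain ⟨t, ht, h2⟩ := le_rsmul_sq 𝒜 hQ hr hc
  exact ⟨t, ht, 𝒜.le_trans _ _ _ (sa_rsmul c hx) (sa_rsmul c (hrsa.pow 2))
    ((hQ.2.1 t ht).pow 2) h1 h2⟩

lemma sum_sq_le (hQ : 𝒜.Dominant Q) {r s : A} (hr : r ∈ Q) (hs : s ∈ Q) :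
    ∃ t ∈ Q, 𝒜.le (r^2 + s^2) (t^2) := by
  obtain ⟨-, hsa, hcomm, hcoer, -, hmul⟩ := id hQ
  have hrsa := hsa r hr
  have hssa := hsa s hs
  have hsr : s * r = r * s := hcomm s hs r hr
  have hrs : r * s = s * r := hsr.symm
  have hw : r * s ∈ Q := hmul r hr s hs
  have hwsa : IsSelfAdjoint (r*s) := hsa _ hw
  obtain ⟨ε, hε, hεle⟩ := (hcoer r hr).2
  obtain ⟨δ, hδ, hδle⟩ := (hcoer s hs).2
  -- s ∗ (ε•1) ∗ s ≲ s ∗ r² ∗ s  gives  ε • s² ≲ (r*s)²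
  have key1 : 𝒜.le ((ε:ℂ) • s^2) ((r*s)^2) := by
    have h := 𝒜.conj_le ((ε:ℂ) • 1) (r^2) s (sa_rsmul ε (IsSelfAdjoint.one A))
      (hrsa.pow 2) hεle
    rw [hssa.star_eq, comm_sq hsr] at h
    rw [show s * ((ε:ℂ) • 1) * s = (ε:ℂ) • s^2 by
      rw [mul_smul_comm, mul_one, smul_mul_assoc, pow_two]] at h
    exact h
  have key2 : 𝒜.le ((δ:ℂ) • r^2) ((r*s)^2) := by
    have h := 𝒜.conj_le ((δ:ℂ) • 1) (s^2) r (sa_rsmul δ (IsSelfAdjoint.one A))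
      (hssa.pow 2) hδle
    rw [hrsa.star_eq] at h
    rw [show r * s^2 * r = (r*s)^2 by
      have := comm_sq (r := s) (s := r) hrs
      rwa [hsr] at this] at h
    rw [show r * ((δ:ℂ) • 1) * r = (δ:ℂ) • r^2 by
      rw [mul_smul_comm, mul_one, smul_mul_assoc, pow_two]] at h
    exact h
  have hw2sa : IsSelfAdjoint ((r*s)^2) := hwsa.pow 2
  -- divide by ε, δ
  have key1' : 𝒜.le (s^2) ((ε⁻¹:ℝ) • (r*s)^2 : A) := by
    have h := le_rsmul 𝒜 (c := ε⁻¹) (by positivity) (sa_rsmul ε (hssa.pow 2)) hw2sa key1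
    rwa [smul_smul, ← Complex.ofReal_mul, inv_mul_cancel₀ hε.ne', Complex.ofReal_one,
      one_smul] at h
  have key2' : 𝒜.le (r^2) ((δ⁻¹:ℝ) • (r*s)^2 : A) := by
    have h := le_rsmul 𝒜 (c := δ⁻¹) (by positivity) (sa_rsmul δ (hrsa.pow 2)) hw2sa key2
    rwa [smul_smul, ← Complex.ofReal_mul, inv_mul_cancel₀ hδ.ne', Complex.ofReal_one,
      one_smul] at h
  -- add them up
  have A1 := 𝒜.add_right (r^2) (((δ⁻¹:ℝ):ℂ) • (r*s)^2) (s^2) (hrsa.pow 2)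
    (sa_rsmul _ hw2sa) (hssa.pow 2) key2'
  have A2 := 𝒜.add_right (s^2) (((ε⁻¹:ℝ):ℂ) • (r*s)^2) (((δ⁻¹:ℝ):ℂ) • (r*s)^2)
    (hssa.pow 2) (sa_rsmul _ hw2sa) (sa_rsmul _ hw2sa) key1'
  rw [add_comm (s^2)] at A2
  have A3 := 𝒜.le_trans _ _ _ ((hrsa.pow 2).add (hssa.pow 2))
    ((sa_rsmul _ hw2sa).add (hssa.pow 2))
    ((sa_rsmul _ hw2sa).add (sa_rsmul _ hw2sa)) A1 A2
  have e : ((ε⁻¹:ℝ):ℂ) • (r*s)^2 + ((δ⁻¹:ℝ):ℂ) • (r*s)^2 = ((ε⁻¹ + δ⁻¹ : ℝ):ℂ) • (r*s)^2 := by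
    rw [← add_smul, ← Complex.ofReal_add]
  rw [e] at A3
  obtain ⟨t, ht, h4⟩ := le_rsmul_sq 𝒜 hQ hw (c := ε⁻¹ + δ⁻¹) (by positivity)
  exact ⟨t, ht, 𝒜.le_trans _ _ _ ((hrsa.pow 2).add (hssa.pow 2)) (sa_rsmul _ hw2sa)
    ((hsa t ht).pow 2) A3 h4⟩

def Dom1 (𝒜 : QOSA A) (Q : Set A) (a : A) : Prop :=
  ∀ q ∈ Q, ∃ r ∈ Q, 𝒜.le (star a * q ^ 2 * a) (r ^ 2)

lemma dom1_one (hQ : 𝒜.Dominant Q) : Dom1 𝒜 Q (1 : A) := by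
  intro q hq
  refine ⟨q, hq, ?_⟩
  rw [star_one, one_mul, mul_one]
  exact 𝒜.le_refl _ ((hQ.2.1 q hq).pow 2)

lemma dom1_mem (hQ : 𝒜.Dominant Q) {a : A} (ha : a ∈ Q) : Dom1 𝒜 Q a := by
  intro q hq
  have hmem : q * a ∈ Q := hQ.2.2.2.2.2 q hq a ha
  refine ⟨q * a, hmem, ?_⟩
  rw [(hQ.2.1 a ha).star_eq, comm_sq (hQ.2.2.1 a ha q hq)]
  exact 𝒜.le_refl _ ((hQ.2.1 _ hmem).pow 2)

lemma dom1_smul (hQ : 𝒜.Dominant Q) (c : ℂ) {a : A} (ha : Dom1 𝒜 Q a) :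
    Dom1 𝒜 Q (c • a) := by
  intro q hq
  obtain ⟨r, hr, h⟩ := ha q hq
  have hxsa : IsSelfAdjoint (star a * q^2 * a) := sa_conj a ((hQ.2.1 q hq).pow 2)
  obtain ⟨t, ht, h2⟩ := le_rsmul_dom 𝒜 hQ hxsa hr h (Complex.normSq_nonneg c)
  refine ⟨t, ht, ?_⟩
  rw [show star (c • a) * q^2 * (c • a)
      = ((Complex.normSq c : ℝ):ℂ) • (star a * q^2 * a) by
    rw [star_smul, smul_mul_assoc, smul_mul_assoc, mul_smul_comm, smul_smul,
      Complex.normSq_eq_conj_mul_self]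
    rfl]
  exact h2

lemma dom1_mul (hQ : 𝒜.Dominant Q) {a b : A} (ha : Dom1 𝒜 Q a) (hb : Dom1 𝒜 Q b) :
    Dom1 𝒜 Q (a * b) := by
  intro q hq
  obtain ⟨r, hr, h1⟩ := ha q hq
  obtain ⟨t, ht, h2⟩ := hb r hr
  have hq2 : IsSelfAdjoint (q^2) := (hQ.2.1 q hq).pow 2
  have h3 := 𝒜.conj_le (star a * q^2 * a) (r^2) b (sa_conj a hq2)
    ((hQ.2.1 r hr).pow 2) h1
  refine ⟨t, ht, ?_⟩
  rw [show star (a*b) * q^2 * (a*b) = star b * (star a * q^2 * a) * b by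
    rw [star_mul]; noncomm_ring]
  exact 𝒜.le_trans _ _ _ (sa_conj b (sa_conj a hq2)) (sa_conj b ((hQ.2.1 r hr).pow 2))
    ((hQ.2.1 t ht).pow 2) h3 h2

lemma dom1_add (hQ : 𝒜.Dominant Q) {a b : A} (ha : Dom1 𝒜 Q a) (hb : Dom1 𝒜 Q b) :
    Dom1 𝒜 Q (a + b) := by
  intro q hq
  obtain ⟨ra, hra, h1⟩ := ha q hq
  obtain ⟨rb, hrb, h2⟩ := hb q hq
  have hq2 : IsSelfAdjoint (q^2) := (hQ.2.1 q hq).pow 2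
  have hra2 : IsSelfAdjoint (ra^2) := (hQ.2.1 ra hra).pow 2
  have hrb2 : IsSelfAdjoint (rb^2) := (hQ.2.1 rb hrb).pow 2
  set u := star a * q^2 * a with hu
  set v := star b * q^2 * b with hv
  set w := star a * q^2 * b + star b * q^2 * a with hwdef
  have husa : IsSelfAdjoint u := sa_conj a hq2
  have hvsa : IsSelfAdjoint v := sa_conj b hq2
  have hwsa : IsSelfAdjoint w := by
    rw [hwdef, IsSelfAdjoint, star_add, star_mul, star_mul, star_mul, star_mul]
    simp only [star_star, hq2.star_eq, mul_assoc]
    rw [add_comm]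
  -- 0 ≲ (a-b)* q² (a-b) = u + v - w
  have h0 : 𝒜.le 0 (q^2) := (hQ.2.2.2.1 q hq).1.2
  have hneg : 𝒜.le 0 (u + v - w) := by
    have h := 𝒜.conj_le 0 (q^2) (a - b) (IsSelfAdjoint.zero A) hq2 h0
    rw [mul_zero, zero_mul] at h
    rw [show star (a-b) * q^2 * (a-b) = u + v - w by
      rw [hu, hv, hwdef, star_sub]; noncomm_ring] at h
    exact h
  have huvwsa : IsSelfAdjoint (u + v - w) := ((husa.add hvsa).sub hwsa)
  -- w ≲ u + v
  have hw : 𝒜.le w (u + v) := by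
    have h := 𝒜.add_right 0 (u + v - w) w (IsSelfAdjoint.zero A) huvwsa hwsa hneg
    rwa [zero_add, sub_add_cancel] at h
  -- X = w + (u+v) ≲ (u+v) + (u+v)
  have hX : 𝒜.le (star (a+b) * q^2 * (a+b)) ((u+v) + (u+v)) := by
    have h := 𝒜.add_right w (u+v) (u+v) hwsa (husa.add hvsa) (husa.add hvsa) hw
    rw [show star (a+b) * q^2 * (a+b) = w + (u+v) by
      rw [hu, hv, hwdef, star_add]; noncomm_ring]
    exact h
  -- u + v ≲ ra² + rb²
  have huv : 𝒜.le (u + v) (ra^2 + rb^2) := by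
    have A1 := 𝒜.add_right u (ra^2) v husa hra2 hvsa h1
    have A2 := 𝒜.add_right v (rb^2) (ra^2) hvsa hrb2 hra2 h2
    rw [add_comm v (ra^2)] at A2
    rw [add_comm (rb^2) (ra^2)] at A2
    exact 𝒜.le_trans _ _ _ (husa.add hvsa) (hra2.add hvsa) (hra2.add hrb2) A1 A2
  -- double it
  have hdouble : 𝒜.le ((u+v) + (u+v)) ((ra^2 + rb^2) + (ra^2 + rb^2)) := by
    have B1 := 𝒜.add_right (u+v) (ra^2+rb^2) (u+v) (husa.add hvsa) (hra2.add hrb2)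
      (husa.add hvsa) huv
    have B2 := 𝒜.add_right (u+v) (ra^2+rb^2) (ra^2+rb^2) (husa.add hvsa) (hra2.add hrb2)
      (hra2.add hrb2) huv
    rw [add_comm (u+v) (ra^2+rb^2)] at B2
    exact 𝒜.le_trans _ _ _ ((husa.add hvsa).add (husa.add hvsa))
      ((hra2.add hrb2).add (husa.add hvsa)) ((hra2.add hrb2).add (hra2.add hrb2)) B1 B2
  -- ra² + rb² ≲ t², then double: 2•(ra²+rb²) ≲ t'²
  obtain ⟨t, ht, h3⟩ := sum_sq_le 𝒜 hQ hra hrb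
  obtain ⟨t', ht', h4⟩ := le_rsmul_dom 𝒜 hQ (hra2.add hrb2) ht h3 (c := 2) (by norm_num)
  have e2 : ((2:ℝ):ℂ) • (ra^2 + rb^2) = (ra^2 + rb^2) + (ra^2 + rb^2) := by
    push_cast
    rw [two_smul]
  rw [e2] at h4
  refine ⟨t', ht', ?_⟩
  have Xsa : IsSelfAdjoint (star (a+b) * q^2 * (a+b)) := sa_conj (a+b) hq2
  have step := 𝒜.le_trans _ _ _ Xsa ((husa.add hvsa).add (husa.add hvsa))
    ((hra2.add hrb2).add (hra2.add hrb2)) hX hdouble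
  exact 𝒜.le_trans _ _ _ Xsa ((hra2.add hrb2).add (hra2.add hrb2))
    ((hQ.2.1 t' ht').pow 2) step h4

end

end Stmt13Aux

end Stmt13AuxSec

/-- for a dominant set `Q`, `Q^↓` is a unital *-subalgebra containing `Q`. -/
theorem statement13 {A : Type*} [Ring A] [Algebra ℂ A] [StarRing A] [StarModule ℂ A]
    (𝒜 : QOSA A) (Q : Set A) (hQ : 𝒜.Dominant Q) :
    (1 : A) ∈ 𝒜.domSub Q ∧
    (∀ a ∈ 𝒜.domSub Q, ∀ b ∈ 𝒜.domSub Q, a + b ∈ 𝒜.domSub Q) ∧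
    (∀ c : ℂ, ∀ a ∈ 𝒜.domSub Q, c • a ∈ 𝒜.domSub Q) ∧
    (∀ a ∈ 𝒜.domSub Q, ∀ b ∈ 𝒜.domSub Q, a * b ∈ 𝒜.domSub Q) ∧
    (∀ a ∈ 𝒜.domSub Q, star a ∈ 𝒜.domSub Q) ∧
    Q ⊆ 𝒜.domSub Q := by
  have mk : ∀ a : A, Stmt13Aux.Dom1 𝒜 Q a → Stmt13Aux.Dom1 𝒜 Q (star a) → a ∈ 𝒜.domSub Q := by
    intro a h1 h2 q hq
    obtain ⟨r, hr, hle1⟩ := h1 q hq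
    obtain ⟨s, hs, hle2⟩ := h2 q hq
    refine ⟨r, hr, s, hs, hle1, ?_⟩
    rwa [star_star] at hle2
  have d1 : ∀ a ∈ 𝒜.domSub Q, Stmt13Aux.Dom1 𝒜 Q a := by
    intro a ha q hq
    obtain ⟨r, hr, s, hs, h1, h2⟩ := ha q hq
    exact ⟨r, hr, h1⟩
  have d2 : ∀ a ∈ 𝒜.domSub Q, Stmt13Aux.Dom1 𝒜 Q (star a) := by
    intro a ha q hq
    obtain ⟨r, hr, s, hs, h1, h2⟩ := ha q hq
    exact ⟨s, hs, by rwa [star_star]⟩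
  refine ⟨?_, ?_, ?_, ?_, ?_, ?_⟩
  · exact mk 1 (Stmt13Aux.dom1_one 𝒜 hQ) (by rw [star_one]; exact Stmt13Aux.dom1_one 𝒜 hQ)
  · intro a ha b hb
    exact mk _ (Stmt13Aux.dom1_add 𝒜 hQ (d1 a ha) (d1 b hb))
      (by rw [star_add]; exact Stmt13Aux.dom1_add 𝒜 hQ (d2 a ha) (d2 b hb))
  · intro c a ha
    exact mk _ (Stmt13Aux.dom1_smul 𝒜 hQ c (d1 a ha))
      (by rw [star_smul]; exact Stmt13Aux.dom1_smul 𝒜 hQ _ (d2 a ha))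
  · intro a ha b hb
    exact mk _ (Stmt13Aux.dom1_mul 𝒜 hQ (d1 a ha) (d1 b hb))
      (by rw [star_mul]; exact Stmt13Aux.dom1_mul 𝒜 hQ (d2 b hb) (d2 a ha))
  · intro a ha
    exact mk _ (d2 a ha) (by rw [star_star]; exact d1 a ha)
  · intro a ha
    exact mk _ (Stmt13Aux.dom1_mem 𝒜 hQ ha)
      (by rw [(hQ.2.1 a ha).star_eq]; exact Stmt13Aux.dom1_mem 𝒜 hQ ha)
end

section
/- Let A be a commutative *-algebra, ω an algebraic state on A, and a ∈ A a Hermitian element such that ω(b* a b) ≥ 0 for all b ∈ A. Then the following are equivalent: (1) for every b ∈ A with ω(b* b) = 1, either ω(b* a b) = 0 or the series ∑_{n=1}^∞ ω(b* aⁿ b)^{−1/(2n)} diverges to ∞; (2) either ω(a) = 0 or the series ∑_{n=1}^∞ ω(aⁿ)^{−1/(2n)} diverges to ∞. -/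
open ComplexOrder

section Defs

variable {A : Type*} [Ring A] [Algebra ℂ A] [StarRing A] [StarModule ℂ A]

/-- An algebraic state is an algebraically positive linear functional with `ω 1 = 1`. -/
def AlgState (ω : A →ₗ[ℂ] ℂ) : Prop := AlgPositive ω ∧ ω 1 = 1

/-- The variance `Var_ω(a) = ω(a* a) - |ω a|²`. -/
noncomputable def Var (ω : A →ₗ[ℂ] ℂ) (a : A) : ℂ :=
  ω (star a * a) - (Complex.normSq (ω a) : ℂ)

end Defs

set_option linter.unusedSectionVars false

section Helpers
variable {A : Type*} [CommRing A] [Algebra ℂ A] [StarRing A] [StarModule ℂ A]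

lemma cs_real (φ : A →ₗ[ℂ] ℂ) (hφ : ∀ z : A, 0 ≤ φ (star z * z))
    (x y : A) (hx : star x = x) (hy : star y = y) :
    (φ (x * y)).re ^ 2 ≤ (φ (x * x)).re * (φ (y * y)).re := by
  have key : ∀ t : ℝ, 0 ≤ (φ (x * x)).re * (t * t) + (2 * (φ (x * y)).re) * t
      + (φ (y * y)).re := by
    intro t
    have h0 := hφ ((t : ℂ) • x + y)
    have hst : star ((t : ℂ) • x + y) = (t : ℂ) • x + y := by
      simp [star_smul, hx, hy, Complex.conj_ofReal]
    rw [hst] at h0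
    have hmul : ((t : ℂ) • x + y) * ((t : ℂ) • x + y) =
        ((t : ℂ) ^ 2) • (x * x) + ((2 : ℂ) * t) • (x * y) + y * y := by
      simp only [Algebra.smul_def, map_pow, map_mul, map_ofNat]
      ring
    rw [hmul] at h0
    simp only [map_add, map_smul, smul_eq_mul] at h0
    have hre := (Complex.le_def.mp h0).1
    simp only [Complex.add_re, Complex.mul_re, ← Complex.ofReal_pow,
      ← Complex.ofReal_ofNat, ← Complex.ofReal_mul, Complex.ofReal_re, Complex.ofReal_im,
      zero_mul, sub_zero, Complex.zero_re] at hre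
    convert hre using 1
    ring
  have hd := discrim_le_zero key
  have hp : 0 ≤ (φ (x * x)).re := by
    have := Complex.le_def.mp (by simpa [hx] using hφ x)
    exact this.1
  have hr : 0 ≤ (φ (y * y)).re := by
    have := Complex.le_def.mp (by simpa [hy] using hφ y)
    exact this.1
  unfold discrim at hd
  nlinarith [hd]

variable (ω : A →ₗ[ℂ] ℂ) (a : A)

lemma re_eq_self {z : ℂ} (hz : 0 ≤ z) : ((z.re : ℂ)) = z := by
  have := Complex.le_def.mp hz
  exact (Complex.ext (by simp) (by simp [← this.2])).symm

lemma mom_nonneg (hω : AlgPositive ω) (ha : star a = a)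
    (hpos : ∀ b : A, 0 ≤ ω (star b * a * b)) :
    ∀ (k : ℕ) (c : A), 0 ≤ ω (star c * a ^ k * c) := by
  intro k c
  rcases Nat.even_or_odd k with ⟨j, hj⟩ | ⟨j, hj⟩
  · have : star c * a ^ k * c = star (a ^ j * c) * (a ^ j * c) := by
      rw [star_mul, star_pow, ha, hj, pow_add]; ring
    rw [this]; exact hω _
  · have : star c * a ^ k * c = star (a ^ j * c) * a * (a ^ j * c) := by
      rw [star_mul, star_pow, ha, hj, pow_add, pow_mul, pow_one, pow_two]; ring
    rw [this]; exact hpos _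

noncomputable def phia : A →ₗ[ℂ] ℂ := ω.comp (LinearMap.mulLeft ℂ a)

lemma phia_pos (hpos : ∀ b : A, 0 ≤ ω (star b * a * b)) :
    ∀ z : A, 0 ≤ (phia ω a) (star z * z) := by
  intro z
  have : a * (star z * z) = star z * a * z := by ring
  simpa [phia, this] using hpos z

lemma cs_even (hω : AlgPositive ω) (ha : star a = a) (j k : ℕ) :
    (ω (a ^ (j + k))).re ^ 2 ≤ (ω (a ^ (j + j))).re * (ω (a ^ (k + k))).re := by
  have h := cs_real ω hω (a ^ j) (a ^ k) (by rw [star_pow, ha]) (by rw [star_pow, ha])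
  simpa [← pow_add] using h

lemma cs_odd (ha : star a = a) (hpos : ∀ b : A, 0 ≤ ω (star b * a * b)) (j k : ℕ) :
    (ω (a ^ (j + k + 1))).re ^ 2 ≤ (ω (a ^ (j + j + 1))).re * (ω (a ^ (k + k + 1))).re := by
  have h := cs_real (phia ω a) (phia_pos ω a hpos) (a ^ j) (a ^ k)
    (by rw [star_pow, ha]) (by rw [star_pow, ha])
  have e : ∀ j k : ℕ, a * (a ^ j * a ^ k) = a ^ (j + k + 1) := by
    intro j k; rw [pow_add, pow_succ]; ring
  simpa [phia, e] using h

lemma logconv (hω : AlgPositive ω) (ha : star a = a)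
    (hpos : ∀ b : A, 0 ≤ ω (star b * a * b)) (k : ℕ) :
    (ω (a ^ (k + 1))).re ^ 2 ≤ (ω (a ^ k)).re * (ω (a ^ (k + 2))).re := by
  rcases Nat.even_or_odd k with ⟨j, hj⟩ | ⟨j, hj⟩
  · have h := cs_even ω a hω ha j (j + 1)
    have e1 : j + (j + 1) = k + 1 := by omega
    have e2 : j + j = k := by omega
    have e3 : (j + 1) + (j + 1) = k + 2 := by omega
    rw [e1, e2, e3] at h; exact h
  · have h := cs_odd ω a ha hpos j (j + 1)
    have e1 : j + (j + 1) + 1 = k + 1 := by omega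
    have e2 : j + j + 1 = k := by omega
    have e3 : (j + 1) + (j + 1) + 1 = k + 2 := by omega
    rw [e1, e2, e3] at h; exact h

end Helpers

lemma ratio_mono (M : ℕ → ℝ) (hMpos : ∀ k, 0 < M k) (hM0 : M 0 = 1)
    (hconv : ∀ k, M (k + 1) ^ 2 ≤ M k * M (k + 2)) :
    ∀ n, M n ^ (n + 1) ≤ M (n + 1) ^ n := by
  intro n
  induction n with
  | zero => simp [hM0]
  | succ n ih =>
    have h1 : (M (n + 1) ^ 2) ^ (n + 1) ≤ (M n * M (n + 2)) ^ (n + 1) :=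
      pow_le_pow_left₀ (sq_nonneg _) (hconv n) _
    rw [mul_pow] at h1
    have h2 : M n ^ (n + 1) * M (n + 2) ^ (n + 1) ≤ M (n + 1) ^ n * M (n + 2) ^ (n + 1) :=
      mul_le_mul_of_nonneg_right ih (pow_nonneg (hMpos _).le _)
    have h3 : (M (n + 1) ^ 2) ^ (n + 1) = M (n + 1) ^ n * M (n + 1) ^ (n + 2) := by
      rw [← pow_add, ← pow_mul]; ring_nf
    rw [h3] at h1
    have h4 : M (n + 1) ^ n * M (n + 1) ^ (n + 2) ≤ M (n + 1) ^ n * M (n + 2) ^ (n + 1) :=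
      le_trans h1 h2
    exact le_of_mul_le_mul_left h4 (pow_pos (hMpos _) _)

lemma rpow_step (M : ℕ → ℝ) (hMpos : ∀ k, 0 < M k) (hM0 : M 0 = 1)
    (hconv : ∀ k, M (k + 1) ^ 2 ≤ M k * M (k + 2)) (n : ℕ) :
    M (n + 1) ^ ((1 : ℝ) / (2 * ((n : ℝ) + 1))) ≤
      M (n + 2) ^ ((1 : ℝ) / (2 * ((n : ℝ) + 1 + 1))) := by
  have hP := ratio_mono M hMpos hM0 hconv (n + 1)
  have h1 : (0:ℝ) ≤ M (n + 1) ^ (n + 2) := pow_nonneg (hMpos _).le _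
  set r : ℝ := 1 / (2 * ((n : ℝ) + 1) * ((n : ℝ) + 2)) with hr
  have hrpos : (0:ℝ) ≤ r := by positivity
  have h2 := Real.rpow_le_rpow h1 hP hrpos
  rw [← Real.rpow_natCast (M (n+1)) (n+2), ← Real.rpow_natCast (M (n+2)) (n+1),
    ← Real.rpow_mul (hMpos _).le, ← Real.rpow_mul (hMpos _).le] at h2
  have e1 : ((n:ℕ) + 2 : ℕ) * r = (1 : ℝ) / (2 * ((n : ℝ) + 1)) := by
    push_cast [hr]; field_simp
  have e2 : ((n:ℕ) + 1 : ℕ) * r = (1 : ℝ) / (2 * ((n : ℝ) + 1 + 1)) := by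
    push_cast [hr]; field_simp; ring
  rw [e1, e2] at h2
  exact h2

set_option maxHeartbeats 1000000 in
lemma odd_tsum_top (S : ℕ → ENNReal) (hS : ∀ n, S (n + 1) ≤ S n) (h0 : S 0 ≠ ⊤)
    (htop : ∑' n, S n = ⊤) : ∑' k, S (2 * k + 1) = ⊤ := by
  by_contra h
  have heo : ∑' k, S (2 * k) + ∑' k, S (2 * k + 1) = ∑' n, S n :=
    tsum_even_add_odd ENNReal.summable ENNReal.summable
  have hsplit : ∑' k, S (2 * k) = S 0 + ∑' k, S (2 * (k + 1)) := by
    have := tsum_eq_zero_add' (f := fun k => S (2 * k)) ENNReal.summable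
    simpa using this
  have hle : ∑' k, S (2 * (k + 1)) ≤ ∑' k, S (2 * k + 1) :=
    ENNReal.tsum_le_tsum fun k => by
      have := hS (2 * k + 1)
      have e : 2 * (k + 1) = 2 * k + 1 + 1 := by omega
      rw [e]; exact this
  have : (∑' n, S n) ≠ ⊤ := by
    rw [← heo, hsplit]
    exact ENNReal.add_ne_top.mpr ⟨ENNReal.add_ne_top.mpr ⟨h0,
      ne_top_of_le_ne_top h hle⟩, h⟩
  exact this htop


/-- for a commutative *-algebra, the Stieltjes condition for a state needs
only be checked on the moments of `a` itself. -/
theorem statement14 {A : Type*} [CommRing A] [Algebra ℂ A] [StarRing A] [StarModule ℂ A]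
    (ω : A →ₗ[ℂ] ℂ) (hω : AlgState ω) (a : A) (ha : IsSelfAdjoint a)
    (hpos : ∀ b : A, 0 ≤ ω (star b * a * b)) :
    (∀ b : A, ω (star b * b) = 1 →
        ω (star b * a * b) = 0 ∨
          (∑' n : ℕ, (ENNReal.ofReal
            (((ω (star b * a ^ (n + 1) * b)).re) ^
              ((1 : ℝ) / (2 * ((n : ℝ) + 1)))))⁻¹) = ⊤) ↔
      (ω a = 0 ∨
        (∑' n : ℕ, (ENNReal.ofReal
          (((ω (a ^ (n + 1))).re) ^ ((1 : ℝ) / (2 * ((n : ℝ) + 1)))))⁻¹) = ⊤) := by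
  obtain ⟨hposω, hone⟩ := hω
  have has : star a = a := ha.star_eq
  have hmom := mom_nonneg ω a hposω has hpos
  constructor
  · intro h
    have h1 := h 1 (by simpa using hone)
    simpa using h1
  · intro h b hb
    right
    -- if some term of the b-series has zero base, the series is ⊤
    have hterm : ∀ n : ℕ, (ω (star b * a ^ (n + 1) * b)).re = 0 →
        (∑' n : ℕ, (ENNReal.ofReal
          (((ω (star b * a ^ (n + 1) * b)).re) ^
            ((1 : ℝ) / (2 * ((n : ℝ) + 1)))))⁻¹) = ⊤ := by
      intro n hn
      refine eq_top_iff.mpr (le_trans ?_ (ENNReal.le_tsum n))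
      rw [hn, Real.zero_rpow (by positivity), ENNReal.ofReal_zero, ENNReal.inv_zero]
    -- key: ω a = 0 forces the second moment with b to vanish
    have hy2 : star (a * (star b * b)) = a * (star b * b) := by
      rw [star_mul, star_mul, star_star, has]; ring
    have hkey0 : ω a = 0 → (ω (star b * a ^ (1 + 1) * b)).re = 0 := by
      intro hA
      have h := cs_real (phia ω a) (phia_pos ω a hpos) 1 (a * (star b * b)) (star_one A) hy2
      simp only [phia, LinearMap.comp_apply, LinearMap.mulLeft_apply] at h
      have e1 : a * (1 * (a * (star b * b))) = star b * a ^ (1 + 1) * b := by ring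
      have e2 : a * (1 * 1) = a := by ring
      rw [e1, e2, hA] at h
      simp only [Complex.zero_re, zero_mul] at h
      have hnn := (Complex.le_def.mp (hmom (1 + 1) b)).1
      simp only [Complex.zero_re] at hnn
      nlinarith [h, hnn]
    rcases h with hA | hS
    · exact hterm 1 (hkey0 hA)
    · by_cases hf : ∀ n : ℕ, (ω (star b * a ^ (n + 1) * b)).re ≠ 0
      swap
      · push_neg at hf
        obtain ⟨n, hn⟩ := hf
        exact hterm n hn
      have hfpos : ∀ n : ℕ, 0 < (ω (star b * a ^ (n + 1) * b)).re := by
        intro n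
        have hnn := (Complex.le_def.mp (hmom (n + 1) b)).1
        simp only [Complex.zero_re] at hnn
        exact lt_of_le_of_ne hnn (Ne.symm (hf n))
      -- moments of a
      set M : ℕ → ℝ := fun k => (ω (a ^ k)).re with hM
      have hMnn : ∀ k, 0 ≤ M k := by
        intro k
        have := (Complex.le_def.mp (hmom k 1)).1
        simpa [hM] using this
      have hMreal : ∀ k, ω (a ^ k) = ((M k : ℝ) : ℂ) := by
        intro k
        have := re_eq_self (z := ω (a ^ k)) (by simpa using hmom k 1)
        simp [hM, this]
      have hM0 : M 0 = 1 := by simp [hM, hone]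
      have hconv : ∀ k, M (k + 1) ^ 2 ≤ M k * M (k + 2) :=
        fun k => logconv ω a hposω has hpos k
      have hM1 : M 1 ≠ 0 := by
        intro h0
        have hA : ω a = 0 := by
          have := hMreal 1
          rw [h0] at this
          simpa using this
        exact (hfpos 1).ne' (hkey0 hA)
      have hMz : ∀ k, M (k + 1) = 0 → M 1 = 0 := by
        intro k
        induction k with
        | zero => exact fun h => h
        | succ k ih =>
          intro h0
          have := hconv k
          rw [h0] at this
          simp only [mul_zero] at this
          have : M (k + 1) = 0 := by nlinarith [hMnn (k + 1)]
          exact ih this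
      have hMpos : ∀ k, 0 < M k := by
        intro k
        cases k with
        | zero => rw [hM0]; norm_num
        | succ k => exact lt_of_le_of_ne (hMnn _) (fun h0 => hM1 (hMz k h0.symm))
      -- the series over a, odd-indexed part diverges
      set S : ℕ → ENNReal := fun n =>
        (ENNReal.ofReal ((M (n + 1)) ^ ((1 : ℝ) / (2 * ((n : ℝ) + 1)))))⁻¹ with hSdef
      have hanti : ∀ n, S (n + 1) ≤ S n := by
        intro n
        have hstep := rpow_step M hMpos hM0 hconv n
        have : ((n : ℝ) + 1 + 1) = (((n + 1 : ℕ) : ℝ) + 1) := by push_cast; ring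
        rw [this] at hstep
        exact ENNReal.inv_le_inv.mpr (ENNReal.ofReal_le_ofReal hstep)
      have hS0 : S 0 ≠ ⊤ := by
        rw [hSdef]
        simp only [ENNReal.inv_ne_top]
        exact (ENNReal.ofReal_pos.mpr (Real.rpow_pos_of_pos (hMpos 1) _)).ne'
      have hStop : ∑' n, S n = ⊤ := hS
      have hOdd := odd_tsum_top S hanti hS0 hStop
      -- Cauchy-Schwarz bound against even moments
      have hyb : star (star b * b) = star b * b := by rw [star_mul, star_star]
      set C : ℝ := (ω ((star b * b) * (star b * b))).re with hC
      have hC1 : (1 : ℝ) ≤ C := by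
        have h := cs_real ω hposω 1 (star b * b) (star_one A) hyb
        rw [one_mul, mul_one, hb, hone] at h
        simpa using h
      have hCnn : (0:ℝ) ≤ C := le_trans zero_le_one hC1
      have hfb : ∀ k : ℕ, (ω (star b * a ^ (k + 1) * b)).re ^ 2 ≤ M (2 * k + 1 + 1) * C := by
        intro k
        have hx : star (a ^ (k + 1)) = a ^ (k + 1) := by rw [star_pow, has]
        have h := cs_real ω hposω (a ^ (k + 1)) (star b * b) hx hyb
        have e1 : a ^ (k + 1) * (star b * b) = star b * a ^ (k + 1) * b := by ring
        have e2 : a ^ (k + 1) * a ^ (k + 1) = a ^ (2 * k + 1 + 1) := by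
          rw [← pow_add]; congr 1; omega
        rw [e1, e2] at h
        exact h
      -- transfer bound through rpow
      have hbound : ∀ k : ℕ,
          (ω (star b * a ^ (k + 1) * b)).re ^ ((1 : ℝ) / (2 * ((k : ℝ) + 1))) ≤
            C ^ ((1 : ℝ) / 4) *
              (M (2 * k + 1 + 1)) ^ ((1 : ℝ) / (2 * (((2 * k + 1 : ℕ) : ℝ) + 1))) := by
        intro k
        set q : ℝ := (1 : ℝ) / (4 * ((k : ℝ) + 1)) with hq
        have hqnn : (0:ℝ) ≤ q := by positivity
        have h2 := Real.rpow_le_rpow (by positivity) (hfb k) hqnn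
        have e3 : ((ω (star b * a ^ (k + 1) * b)).re ^ 2) ^ q =
            (ω (star b * a ^ (k + 1) * b)).re ^ ((1 : ℝ) / (2 * ((k : ℝ) + 1))) := by
          rw [← Real.rpow_natCast ((ω (star b * a ^ (k + 1) * b)).re) 2,
            ← Real.rpow_mul (hfpos k).le]
          congr 1
          push_cast [hq]
          field_simp
          ring
        have e4 : (M (2 * k + 1 + 1) * C) ^ q =
            (M (2 * k + 1 + 1)) ^ q * C ^ q := Real.mul_rpow (hMnn _) hCnn
        rw [e3, e4] at h2
        have e5 : q = (1 : ℝ) / (2 * (((2 * k + 1 : ℕ) : ℝ) + 1)) := by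
          push_cast [hq]; field_simp; ring
        have e6 : C ^ q ≤ C ^ ((1:ℝ)/4) := by
          apply Real.rpow_le_rpow_of_exponent_le hC1
          rw [hq]
          rw [div_le_div_iff₀ (by positivity) (by norm_num)]
          nlinarith [Nat.cast_nonneg (α := ℝ) k]
        calc (ω (star b * a ^ (k + 1) * b)).re ^ ((1 : ℝ) / (2 * ((k : ℝ) + 1)))
            ≤ (M (2 * k + 1 + 1)) ^ q * C ^ q := h2
          _ ≤ (M (2 * k + 1 + 1)) ^ q * C ^ ((1:ℝ)/4) := by
              apply mul_le_mul_of_nonneg_left e6 (Real.rpow_nonneg (hMnn _) _)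
          _ = C ^ ((1:ℝ)/4) * (M (2 * k + 1 + 1)) ^ ((1 : ℝ) / (2 * (((2 * k + 1 : ℕ) : ℝ) + 1))) := by
              rw [← e5]; ring
      -- move to ENNReal
      set c : ENNReal := (ENNReal.ofReal (C ^ ((1:ℝ)/4)))⁻¹ with hc
      have hcne : c ≠ 0 := by
        rw [hc]
        simp [ENNReal.inv_ne_zero]
      have hCfin : ENNReal.ofReal (C ^ ((1:ℝ)/4)) ≠ 0 := by
        exact (ENNReal.ofReal_pos.mpr (Real.rpow_pos_of_pos (lt_of_lt_of_le one_pos hC1) _)).ne'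
      have hTbound : ∀ k : ℕ, c * S (2 * k + 1) ≤
          (ENNReal.ofReal
            (((ω (star b * a ^ (k + 1) * b)).re) ^ ((1 : ℝ) / (2 * ((k : ℝ) + 1)))))⁻¹ := by
        intro k
        have h1 : ENNReal.ofReal
            (((ω (star b * a ^ (k + 1) * b)).re) ^ ((1 : ℝ) / (2 * ((k : ℝ) + 1)))) ≤
            ENNReal.ofReal (C ^ ((1:ℝ)/4)) *
              ENNReal.ofReal ((M (2 * k + 1 + 1)) ^ ((1 : ℝ) / (2 * (((2 * k + 1 : ℕ) : ℝ) + 1)))) := by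
          rw [← ENNReal.ofReal_mul (Real.rpow_nonneg hCnn _)]
          exact ENNReal.ofReal_le_ofReal (hbound k)
        have h2 := ENNReal.inv_le_inv.mpr h1
        rw [ENNReal.mul_inv (Or.inl hCfin) (Or.inl ENNReal.ofReal_ne_top)] at h2
        refine le_trans (le_of_eq ?_) h2
        rw [hc, hSdef]
      refine eq_top_iff.mpr ?_
      calc (⊤ : ENNReal) = c * ∑' k, S (2 * k + 1) := by
            rw [hOdd, ENNReal.mul_top hcne]
        _ = ∑' k, c * S (2 * k + 1) := (ENNReal.tsum_mul_left).symm
        _ ≤ ∑' k : ℕ, (ENNReal.ofReal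
            (((ω (star b * a ^ (k + 1) * b)).re) ^ ((1 : ℝ) / (2 * ((k : ℝ) + 1)))))⁻¹ :=
            ENNReal.tsum_le_tsum hTbound
end
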